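/- Let I be a nonnegative random variable on a probability space (Ω, 𝒜, P), let τ > 0, let N be a positive integer, and let g be a normalized-Gamma(N) random variable independent of I. Then P(I < τ·g) ≥ Σ_{n=1}^{N} (−1)^{n+1} · binom(N, n) · E[exp(−N n I / τ)]. -/

import Mathlib

/-!
Put `u = I / τ`. By independence, `P(I < τ g) = E[γ_N(u, ∞)]`, and
`γ_N(u, ∞) = 1 - erlangCDF N (N u)`. Alzer's bound `erlangCDF n x ≤ (1 - e^{-x})^n` together
with the binomial theorem turns this into the alternating sum.

Alzer's bound goes by induction on `n`: on `[0, x]` the function `e^t · erlangCDF (n + 1) t` has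
derivative `e^t · erlangCDF n t ≤ e^t (1 - e^{-x})^n`, so
`e^x · erlangCDF (n + 1) x ≤ (e^x - 1)(1 - e^{-x})^n = e^x (1 - e^{-x})^{n + 1}`.
-/

open MeasureTheory ProbabilityTheory Set Real
open scoped Nat

theorem hasDerivAt_sum_range_pow_div_factorial (n : ℕ) (x : ℝ) :
    HasDerivAt (fun x : ℝ => ∑ k ∈ Finset.range (n + 1), x ^ k / k !)
      (∑ k ∈ Finset.range n, x ^ k / k !) x := by
  induction n with
  | zero => simpa using hasDerivAt_const x (1 : ℝ)
  | succ n ih =>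
    simp only [Finset.sum_range_succ _ (n + 1)]
    rw [Finset.sum_range_succ]
    refine ih.add (((hasDerivAt_pow (n + 1) x).div_const _).congr_deriv ?_)
    rw [Nat.factorial_succ]
    push_cast
    field_simp

noncomputable def erlangCDF (n : ℕ) (x : ℝ) : ℝ :=
  1 - exp (-x) * ∑ k ∈ Finset.range n, x ^ k / k !

theorem exp_mul_erlangCDF (n : ℕ) (x : ℝ) :
    exp x * erlangCDF n x = exp x - ∑ k ∈ Finset.range n, x ^ k / k ! := by
  rw [erlangCDF, mul_sub, mul_one, ← mul_assoc, ← exp_add, add_neg_cancel, exp_zero, one_mul]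

theorem hasDerivAt_exp_mul_erlangCDF_succ (n : ℕ) (x : ℝ) :
    HasDerivAt (fun t => exp t * erlangCDF (n + 1) t) (exp x * erlangCDF n x) x := by
  simp only [exp_mul_erlangCDF]
  exact (hasDerivAt_exp x).sub (hasDerivAt_sum_range_pow_div_factorial n x)

theorem hasDerivAt_erlangCDF_succ (n : ℕ) (x : ℝ) :
    HasDerivAt (erlangCDF (n + 1)) (exp (-x) * (x ^ n / n !)) x := by
  refine ((hasDerivAt_const x 1).sub ((hasDerivAt_neg x).exp.mul
    (hasDerivAt_sum_range_pow_div_factorial n x))).congr_deriv ?_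
  rw [Finset.sum_range_succ]
  ring

theorem erlangCDF_le_one_sub_exp_neg_pow (n : ℕ) {x : ℝ} (hx : 0 ≤ x) :
    erlangCDF n x ≤ (1 - exp (-x)) ^ n := by
  induction n generalizing x with
  | zero => simp [erlangCDF]
  | succ n ih =>
    let g : ℝ → ℝ := fun t => (exp t - 1) * (1 - exp (-x)) ^ n - exp t * erlangCDF (n + 1) t
    have hg : ∀ t, HasDerivAt g (exp t * ((1 - exp (-x)) ^ n - erlangCDF n t)) t := fun t =>
      ((((hasDerivAt_exp t).sub_const 1).mul_const _).sub
        (hasDerivAt_exp_mul_erlangCDF_succ n t)).congr_deriv (by ring)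
    have hmono : MonotoneOn g (Icc 0 x) := by
      refine monotoneOn_of_hasDerivWithinAt_nonneg (convex_Icc 0 x)
        (fun t _ => (hg t).continuousAt.continuousWithinAt)
        (fun t _ => (hg t).hasDerivWithinAt) fun t ht => ?_
      rw [interior_Icc] at ht
      have hq : erlangCDF n t ≤ (1 - exp (-x)) ^ n := (ih ht.1.le).trans <| by
        have : exp (-t) ≤ 1 := exp_le_one_iff.2 (by linarith [ht.1])
        gcongr
        exact ht.2.le
      exact mul_nonneg (exp_pos t).le (sub_nonneg.2 hq)
    have hg0 : g 0 = 0 := by simp [g, erlangCDF, Finset.sum_range_succ']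
    have hexp : exp x - 1 = exp x * (1 - exp (-x)) := by
      rw [mul_sub, mul_one, ← exp_add, add_neg_cancel, exp_zero]
    have hgx : g x = exp x * ((1 - exp (-x)) ^ (n + 1) - erlangCDF (n + 1) x) := by
      simp only [g, hexp]
      ring
    have hgx_nonneg : 0 ≤ g x := hg0 ▸ hmono ⟨le_rfl, hx⟩ ⟨hx, le_rfl⟩ hx
    rw [hgx] at hgx_nonneg
    exact sub_nonneg.1 ((mul_nonneg_iff_of_pos_left (exp_pos x)).1 hgx_nonneg)

theorem gammaPDFReal_natCast_succ (n : ℕ) (r : ℝ) {t : ℝ} (ht : 0 ≤ t) :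
    gammaPDFReal (n + 1 : ℕ) r t = r * (exp (-(r * t)) * ((r * t) ^ n / n !)) := by
  rw [gammaPDFReal, if_pos ht, Nat.cast_add_one, add_sub_cancel_right, Gamma_nat_eq_factorial,
    ← Nat.cast_add_one, rpow_natCast, rpow_natCast]
  ring

theorem gammaMeasure_Iic {n : ℕ} (hn : 0 < n) {r : ℝ} (hr : 0 < r) {z : ℝ} (hz : 0 ≤ z) :
    gammaMeasure n r (Iic z) = ENNReal.ofReal (erlangCDF n (r * z)) := by
  obtain ⟨m, rfl⟩ : ∃ m, n = m + 1 := ⟨n - 1, by omega⟩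
  set f : ℝ → ℝ := fun t => r * (exp (-(r * t)) * ((r * t) ^ m / m !))
  have hf : EqOn (gammaPDFReal (m + 1 : ℕ) r) f (Icc 0 z) := fun t ht =>
    gammaPDFReal_natCast_succ m r ht.1
  have hderiv : ∀ t, HasDerivAt (fun t => erlangCDF (m + 1) (r * t)) (f t) t := fun t =>
    ((hasDerivAt_erlangCDF_succ m (r * t)).comp t ((hasDerivAt_id t).const_mul r)).congr_deriv
      (by simp only [f]; ring)
  have hfc : Continuous f := by fun_prop
  have hintegral : ∫ t in Icc 0 z, gammaPDFReal (m + 1 : ℕ) r t = erlangCDF (m + 1) (r * z) := by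
    rw [setIntegral_congr_fun measurableSet_Icc hf, integral_Icc_eq_integral_Ioc,
      ← intervalIntegral.integral_of_le hz,
      intervalIntegral.integral_eq_sub_of_hasDerivAt (fun t _ => hderiv t)
        (hfc.intervalIntegrable 0 z)]
    simp [erlangCDF, Finset.sum_range_succ']
  rw [gammaMeasure, withDensity_apply _ measurableSet_Iic,
    lintegral_Iic_eq_lintegral_Iio_add_Icc _ hz, lintegral_gammaPDF_of_nonpos le_rfl, zero_add,
    ← hintegral, ofReal_integral_eq_lintegral_ofReal]
  · rfl
  · exact hfc.integrableOn_Icc.congr_fun hf.symm measurableSet_Icc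
  · exact Filter.Eventually.of_forall (gammaPDFReal_nonneg (by positivity) hr)

theorem ProbabilityTheory.IndepFun.measure_lt_eq_lintegral_map_Ioi {Ω : Type*}
    [MeasurableSpace Ω] {P : Measure Ω} [IsFiniteMeasure P] {X Y : Ω → ℝ}
    (hX : AEMeasurable X P) (hY : AEMeasurable Y P) (h : IndepFun X Y P) :
    P {ω | X ω < Y ω} = ∫⁻ ω, P.map Y (Ioi (X ω)) ∂P := by
  have hS : MeasurableSet {p : ℝ × ℝ | p.1 < p.2} := measurableSet_lt measurable_fst measurable_snd
  have hmeas : Measurable fun x => P.map Y (Ioi x) :=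
    Antitone.measurable fun a b hab => measure_mono (Ioi_subset_Ioi hab)
  calc P {ω | X ω < Y ω} = P.map (fun ω => (X ω, Y ω)) {p | p.1 < p.2} :=
        (Measure.map_apply_of_aemeasurable (hX.prodMk hY) hS).symm
    _ = ((P.map X).prod (P.map Y)) {p | p.1 < p.2} := by
        rw [(indepFun_iff_map_prod_eq_prod_map_map hX hY).1 h]
    _ = ∫⁻ x, P.map Y (Ioi x) ∂P.map X := Measure.prod_apply hS
    _ = ∫⁻ ω, P.map Y (Ioi (X ω)) ∂P := lintegral_map' hmeas.aemeasurable hX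

theorem one_sub_exp_neg_mem_Icc {x : ℝ} (hx : 0 ≤ x) : 1 - exp (-x) ∈ Icc 0 1 :=
  ⟨sub_nonneg.2 (exp_le_one_iff.2 (neg_nonpos.2 hx)), sub_le_self 1 (exp_pos _).le⟩

theorem ofReal_le_gammaMeasure_Ioi {n : ℕ} (hn : 0 < n) {r : ℝ} (hr : 0 < r) {z : ℝ}
    (hz : 0 ≤ z) : ENNReal.ofReal (1 - (1 - exp (-(r * z))) ^ n) ≤ gammaMeasure n r (Ioi z) := by
  have := isProbabilityMeasure_gammaMeasure (Nat.cast_pos.2 hn) hr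
  have hpow_nonneg := pow_nonneg (one_sub_exp_neg_mem_Icc (mul_nonneg hr.le hz)).1 n
  rw [ENNReal.ofReal_sub _ hpow_nonneg, ENNReal.ofReal_one, ← compl_Iic,
    prob_compl_eq_one_sub measurableSet_Iic, gammaMeasure_Iic hn hr hz]
  gcongr
  exact erlangCDF_le_one_sub_exp_neg_pow n (mul_nonneg hr.le hz)

theorem sum_Icc_neg_one_pow_mul_choose_mul_pow {R : Type*} [CommRing R] (x : R) (N : ℕ) :
    ∑ n ∈ Finset.Icc 1 N, (-1) ^ (n + 1) * (N.choose n : R) * x ^ n = 1 - (1 - x) ^ N := by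
  rw [sub_eq_neg_add 1 x, add_pow, Nat.range_succ_eq_Icc_zero,
    ← Finset.insert_Icc_add_one_left_eq_Icc N.zero_le, Finset.sum_insert (by simp)]
  simp only [neg_pow x, one_pow, mul_one, pow_succ]
  simp [Finset.sum_neg_distrib, mul_comm, mul_left_comm]

/-- **Alternating-sum lower bound on the Gamma-smoothed interference CDF.**
Let `I` be a nonnegative random variable, `τ > 0`, `N` a positive integer, and
let `g` be a normalized-Gamma(`N`) random variable independent of `I`.  Then
`P(I < τ·g) ≥ Σ_{n=1}^{N} (−1)^{n+1} · binom(N, n) · E[exp(−N n I / τ)]`. -/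
theorem smoothed_cdf_lower_bound
    {Ω : Type*} [MeasurableSpace Ω] (P : Measure Ω) [IsProbabilityMeasure P]
    (I g : Ω → ℝ) (hI : Measurable I) (hg : Measurable g)
    (hI0 : ∀ ω, 0 ≤ I ω)
    (τ : ℝ) (hτ : 0 < τ) (N : ℕ) (hN : 0 < N)
    (hlaw : Measure.map g P = gammaMeasure (N : ℝ) (N : ℝ))
    (hindep : IndepFun I g P) :
    ∑ n ∈ Finset.Icc 1 N, (-1 : ℝ) ^ (n + 1) * (N.choose n : ℝ) *
        ∫ ω, Real.exp (-((N : ℝ) * n * I ω) / τ) ∂P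
      ≤ (P {ω | I ω < τ * g ω}).toReal := by
  have hexponent_nonneg (ω : Ω) : 0 ≤ N * (I ω / τ) := by have := hI0 ω; positivity
  have hLHS : ∑ n ∈ Finset.Icc 1 N, (-1 : ℝ) ^ (n + 1) * (N.choose n : ℝ) *
        ∫ ω, Real.exp (-((N : ℝ) * n * I ω) / τ) ∂P
      = ∫ ω, 1 - (1 - exp (-(N * (I ω / τ)))) ^ N ∂P := by
    have hmeas : Measurable fun ω => exp (-(N * (I ω / τ))) := by fun_prop
    have hint (n : ℕ) : Integrable (fun ω => exp (-(N * (I ω / τ))) ^ n) P := by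
      refine .of_bound (hmeas.pow_const n).aestronglyMeasurable 1 (.of_forall fun ω => ?_)
      rw [norm_pow, norm_of_nonneg (exp_pos _).le]
      exact pow_le_one₀ (exp_pos _).le (exp_le_one_iff.2 (neg_nonpos.2 (hexponent_nonneg ω)))
    have hexp (n : ℕ) (ω : Ω) : exp (-((N : ℝ) * n * I ω) / τ) = exp (-(N * (I ω / τ))) ^ n := by
      rw [← exp_nat_mul]
      ring_nf
    simp_rw [hexp, ← integral_const_mul, ← integral_finsetSum _ fun n _ => (hint n).const_mul _,
      sum_Icc_neg_one_pow_mul_choose_mul_pow]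
  have hevent : {ω | I ω < τ * g ω} = {ω | I ω / τ < g ω} :=
    Set.ext fun ω => (div_lt_iff₀' hτ).symm
  have hindep' : IndepFun (fun ω => I ω / τ) g P :=
    hindep.comp (measurable_div_const τ) measurable_id
  rw [hLHS, integral_eq_lintegral_of_nonneg_ae (.of_forall fun ω => ?_) (by fun_prop)]
  · refine ENNReal.toReal_mono (measure_ne_top P _) ?_
    rw [hevent, hindep'.measure_lt_eq_lintegral_map_Ioi (by fun_prop) hg.aemeasurable, hlaw]
    exact lintegral_mono fun ω =>
      ofReal_le_gammaMeasure_Ioi hN (Nat.cast_pos.2 hN) (div_nonneg (hI0 ω) hτ.le)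
  · obtain ⟨h0, h1⟩ := one_sub_exp_neg_mem_Icc (hexponent_nonneg ω)
    exact sub_nonneg.2 (pow_le_one₀ h0 h1)
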